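/- arXiv:1609.00476 — 3 statements merged into one kernel-verified Lean document; each statement's English description precedes it below -/
import Mathlib

section
/- Let G be a finite nilpotent group and let P₁, ..., P_k be its Sylow subgroups (one for each prime dividing |G|). Then csd(G) = csd(P₁) · csd(P₂) ⋯ csd(P_k). -/
/-!
A finite nilpotent group is the direct product of its Sylow subgroups, and these have
pairwise coprime orders. In a direct product `∏ Gᵢ` of groups of pairwise coprime orders
every subgroup `H` is the product of its projections `Hᵢ`; moreover `H` is cyclic iff every
`Hᵢ` is (a product of cyclic groups of coprime orders is cyclic), and `HK = KH` iff
`HᵢKᵢ = KᵢHᵢ` for every `i`. Hence the cyclic subgroups of `∏ Gᵢ`, and the permuting pairs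
of them, are in bijection with families of such objects in the factors, so both counts in
`csd` are multiplicative.
-/

open Pointwise

/-- The cyclic subgroup commutativity degree of a group `G`: the proportion of
pairs of cyclic subgroups `(H, K)` of `G` with `HK = KH`. -/
noncomputable def csd (G : Type*) [Group G] : ℚ :=
  (Nat.card {pr : Subgroup G × Subgroup G //
      IsCyclic ↥pr.1 ∧ IsCyclic ↥pr.2 ∧
      (pr.1 : Set G) * (pr.2 : Set G) = (pr.2 : Set G) * (pr.1 : Set G)} : ℚ) /
  (Nat.card {H : Subgroup G // IsCyclic ↥H} : ℚ) ^ 2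

open scoped Function

abbrev CyclicSubgroup (G : Type*) [Group G] := {H : Subgroup G // IsCyclic H}

abbrev PermutingCyclicPair (G : Type*) [Group G] :=
  {pr : Subgroup G × Subgroup G //
    IsCyclic pr.1 ∧ IsCyclic pr.2 ∧ (pr.1 : Set G) * (pr.2 : Set G) = (pr.2 : Set G) * pr.1}

lemma csd_eq_card_div (G : Type*) [Group G] :
    csd G = (Nat.card (PermutingCyclicPair G) : ℚ) / (Nat.card (CyclicSubgroup G) : ℚ) ^ 2 :=
  rfl

section congr

variable {G H : Type*} [Group G] [Group H]

lemma MulEquiv.isCyclic_map_iff (e : G ≃* H) (K : Subgroup G) :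
    IsCyclic (K.map (e : G →* H)) ↔ IsCyclic K :=
  (e.subgroupMap K).isCyclic.symm

lemma MulEquiv.map_mul_map_comm_iff (e : G ≃* H) (A B : Subgroup G) :
    ((A.map (e : G →* H) : Set H) * B.map (e : G →* H) =
        (B.map (e : G →* H) : Set H) * A.map (e : G →* H)) ↔
      (A : Set G) * B = B * A := by
  simp only [Subgroup.coe_map, ← Set.image_mul]
  exact Set.image_eq_image e.injective

lemma csd_congr (e : G ≃* H) : csd G = csd H := by
  let φ : Subgroup G ≃ Subgroup H := e.mapSubgroup.toEquiv
  have hcyc : Nat.card (CyclicSubgroup G) = Nat.card (CyclicSubgroup H) :=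
    Nat.card_congr (φ.subtypeEquiv fun K => (e.isCyclic_map_iff K).symm)
  have hpair : Nat.card (PermutingCyclicPair G) = Nat.card (PermutingCyclicPair H) :=
    Nat.card_congr ((φ.prodCongr φ).subtypeEquiv fun pr =>
      (e.isCyclic_map_iff pr.1).symm.and
        ((e.isCyclic_map_iff pr.2).symm.and (e.map_mul_map_comm_iff pr.1 pr.2).symm))
  rw [csd_eq_card_div, csd_eq_card_div, hcyc, hpair]

end congr

lemma Set.univ_pi_mul_univ_pi {ι : Type*} {α : ι → Type*} [∀ i, Mul (α i)]
    (s t : ∀ i, Set (α i)) :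
    Set.univ.pi s * Set.univ.pi t = Set.univ.pi fun i => s i * t i := by
  ext f
  constructor
  · rintro ⟨a, ha, b, hb, rfl⟩ i _
    exact ⟨a i, ha i trivial, b i, hb i trivial, rfl⟩
  · intro hf
    choose a ha b hb hab using fun i => hf i trivial
    exact ⟨a, fun i _ => ha i, b, fun i _ => hb i, funext hab⟩

section pi

variable {ι : Type*} {G : ι → Type*} [∀ i, Group (G i)]

lemma Subgroup.map_evalMonoidHom_pi [DecidableEq ι] (A : ∀ i, Subgroup (G i)) (i : ι) :
    (Subgroup.pi Set.univ A).map (Pi.evalMonoidHom G i) = A i := by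
  refine le_antisymm ?_ fun x hx => ⟨Pi.mulSingle i x, ?_, Pi.mulSingle_eq_same i x⟩
  · rintro _ ⟨g, hg, rfl⟩
    exact hg i trivial
  · simpa using hx

def Subgroup.univPiMulEquiv (A : ∀ i, Subgroup (G i)) :
    Subgroup.pi Set.univ A ≃* ∀ i, A i where
  toFun x i := ⟨x.1 i, x.2 i trivial⟩
  invFun f := ⟨fun i => f i, fun i _ => (f i).2⟩
  map_mul' _ _ := rfl

lemma isCyclic_pi_of_coprime [Fintype ι] [∀ i, Finite (G i)]
    (hcop : Pairwise (Nat.Coprime on fun i => Nat.card (G i))) [∀ i, IsCyclic (G i)] :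
    IsCyclic (∀ i, G i) := by
  choose g hg using fun i => IsCyclic.exists_generator (α := G i)
  have hord (i : ι) : orderOf (g i) = Nat.card (G i) :=
    orderOf_eq_card_of_forall_mem_zpowers (hg i)
  refine isCyclic_of_orderOf_eq_card g ?_
  rw [Pi.orderOf, Nat.card_pi, ← Finset.lcm_eq_prod (hcop.set_pairwise _)]
  simp only [hord]

end pi

section coprime

variable {ι : Type*} [Fintype ι] [DecidableEq ι] {G : ι → Type*} [∀ i, Group (G i)]
  (hcop : Pairwise (Nat.Coprime on fun i => Nat.card (G i)))
include hcop

lemma Subgroup.mulSingle_apply_mem_of_coprime (H : Subgroup (∀ i, G i)) {g : ∀ i, G i}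
    (hg : g ∈ H) (i : ι) : Pi.mulSingle i (g i) ∈ H := by
  -- `n` kills every coordinate but the `i`-th, on which it acts invertibly.
  let n := ∏ j ∈ Finset.univ.erase i, Nat.card (G j)
  have hgn : g ^ n = Pi.mulSingle i (g i ^ n) := by
    funext j
    rcases eq_or_ne j i with rfl | hji
    · simp
    · have : Nat.card (G j) ∣ n := Finset.dvd_prod_of_mem _ (by simp [hji])
      simp [Pi.mulSingle_eq_of_ne hji, orderOf_dvd_iff_pow_eq_one.mp
        ((_root_.orderOf_dvd_natCard (g j)).trans this)]
  have hcopn : n.Coprime (orderOf (g i)) :=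
    (Nat.Coprime.prod_left fun j hj => hcop (Finset.ne_of_mem_erase hj)).coprime_dvd_right
      (_root_.orderOf_dvd_natCard _)
  obtain ⟨m, hm⟩ := exists_pow_eq_self_of_coprime hcopn
  have : Pi.mulSingle i (g i) = (g ^ n) ^ m := by rw [hgn, ← Pi.mulSingle_pow, hm]
  exact this ▸ H.pow_mem (H.pow_mem hg n) m

lemma Subgroup.eq_pi_map_evalMonoidHom_of_coprime (H : Subgroup (∀ i, G i)) :
    H = Subgroup.pi Set.univ fun i => H.map (Pi.evalMonoidHom G i) := by
  refine le_antisymm (fun g hg i _ => ⟨g, hg, rfl⟩) fun g hg => ?_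
  refine Subgroup.pi_mem_of_mulSingle_mem g fun i => ?_
  obtain ⟨h, hh, hhi⟩ := hg i trivial
  simpa [← hhi] using H.mulSingle_apply_mem_of_coprime hcop hh i

noncomputable def Subgroup.piEquivOfCoprime : Subgroup (∀ i, G i) ≃ ∀ i, Subgroup (G i) where
  toFun H i := H.map (Pi.evalMonoidHom G i)
  invFun A := Subgroup.pi Set.univ A
  left_inv H := (H.eq_pi_map_evalMonoidHom_of_coprime hcop).symm
  right_inv A := funext (Subgroup.map_evalMonoidHom_pi A)

lemma Subgroup.isCyclic_iff_forall_map_evalMonoidHom_of_coprime [∀ i, Finite (G i)]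
    (H : Subgroup (∀ i, G i)) :
    IsCyclic H ↔ ∀ i, IsCyclic (H.map (Pi.evalMonoidHom G i)) := by
  refine ⟨fun _ i => isCyclic_of_surjective _ ((Pi.evalMonoidHom G i).subgroupMap_surjective H),
    fun _ => ?_⟩
  have hcop' : Pairwise (Nat.Coprime on fun i => Nat.card (H.map (Pi.evalMonoidHom G i))) :=
    fun i j hij => Nat.Coprime.coprime_dvd_right (Subgroup.card_subgroup_dvd_card _)
      ((hcop hij).coprime_dvd_left (Subgroup.card_subgroup_dvd_card _))
  rw [H.eq_pi_map_evalMonoidHom_of_coprime hcop]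
  exact (Subgroup.univPiMulEquiv _).isCyclic.mpr (isCyclic_pi_of_coprime hcop')

lemma Subgroup.coe_mul_coe_eq_pi_of_coprime (H K : Subgroup (∀ i, G i)) :
    (H : Set (∀ i, G i)) * (K : Set (∀ i, G i)) =
      Set.univ.pi fun i => (H.map (Pi.evalMonoidHom G i) : Set (G i)) *
        (K.map (Pi.evalMonoidHom G i) : Set (G i)) := by
  conv_lhs =>
    rw [H.eq_pi_map_evalMonoidHom_of_coprime hcop, K.eq_pi_map_evalMonoidHom_of_coprime hcop]
  exact Set.univ_pi_mul_univ_pi _ _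

lemma Subgroup.coe_mul_comm_iff_forall_of_coprime (H K : Subgroup (∀ i, G i)) :
    (H : Set (∀ i, G i)) * (K : Set (∀ i, G i)) =
        (K : Set (∀ i, G i)) * (H : Set (∀ i, G i)) ↔
      ∀ i, (H.map (Pi.evalMonoidHom G i) : Set (G i)) *
          (K.map (Pi.evalMonoidHom G i) : Set (G i)) =
        (K.map (Pi.evalMonoidHom G i) : Set (G i)) *
          (H.map (Pi.evalMonoidHom G i) : Set (G i)) := by
  refine ⟨fun h i => ?_, fun h => ?_⟩
  · simpa only [Subgroup.coe_map, Set.image_mul] using congrArg (Pi.evalMonoidHom G i '' ·) h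
  · rw [H.coe_mul_coe_eq_pi_of_coprime hcop, K.coe_mul_coe_eq_pi_of_coprime hcop]
    exact Set.pi_congr rfl fun i _ => h i

noncomputable def cyclicSubgroupPiEquivOfCoprime [∀ i, Finite (G i)] :
    CyclicSubgroup (∀ i, G i) ≃ ∀ i, CyclicSubgroup (G i) :=
  ((Subgroup.piEquivOfCoprime hcop).subtypeEquiv
    (Subgroup.isCyclic_iff_forall_map_evalMonoidHom_of_coprime hcop)).trans
    Equiv.subtypePiEquivPi

noncomputable def permutingCyclicPairPiEquivOfCoprime [∀ i, Finite (G i)] :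
    PermutingCyclicPair (∀ i, G i) ≃ ∀ i, PermutingCyclicPair (G i) :=
  ((((Subgroup.piEquivOfCoprime hcop).prodCongr (Subgroup.piEquivOfCoprime hcop)).trans
    (Equiv.arrowProdEquivProdArrow _ _ _).symm).subtypeEquiv fun pr =>
      ((pr.1.isCyclic_iff_forall_map_evalMonoidHom_of_coprime hcop).and
        ((pr.2.isCyclic_iff_forall_map_evalMonoidHom_of_coprime hcop).and
          (pr.1.coe_mul_comm_iff_forall_of_coprime hcop pr.2))).trans
        (forall_and.trans (and_congr_right' forall_and)).symm).trans
    Equiv.subtypePiEquivPi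

lemma csd_pi_of_coprime [∀ i, Finite (G i)] : csd (∀ i, G i) = ∏ i, csd (G i) := by
  simp only [csd_eq_card_div, Nat.card_congr (permutingCyclicPairPiEquivOfCoprime hcop),
    Nat.card_congr (cyclicSubgroupPiEquivOfCoprime hcop), Nat.card_pi, Nat.cast_prod,
    Finset.prod_div_distrib, Finset.prod_pow]

end coprime

section sylow

variable {G : Type*} [Group G] [Finite G] (P : ∀ p ∈ (Nat.card G).primeFactors, Sylow p G)

lemma Sylow.pairwise_coprime_card :
    Pairwise (Nat.Coprime on fun p : (Nat.card G).primeFactors => Nat.card (P p.1 p.2)) := by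
  intro p q hpq
  have (r : (Nat.card G).primeFactors) : Fact (r : ℕ).Prime :=
    ⟨Nat.prime_of_mem_primeFactors r.2⟩
  exact IsPGroup.coprime_card_of_ne p q (Subtype.coe_ne_coe.mpr hpq) _ _
    (P p.1 p.2).isPGroup' (P q.1 q.2).isPGroup'

noncomputable def Sylow.piMulEquivOfIsNilpotent [Group.IsNilpotent G] :
    (∀ p : (Nat.card G).primeFactors, P p.1 p.2) ≃* G :=
  have (p : (Nat.card G).primeFactors) : Fact (p : ℕ).Prime :=
    ⟨Nat.prime_of_mem_primeFactors p.2⟩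
  -- Normality makes each `Sylow p G` a singleton, collapsing the inner product of Mathlib's
  -- `directProductOfNormal` to the chosen `P p`.
  have (p : (Nat.card G).primeFactors) : Unique (Sylow p G) :=
    Sylow.unique_of_normal (P p.1 p.2) inferInstance
  (MulEquiv.piCongrRight fun p => (MulEquiv.piUnique fun Q : Sylow p G => Q).trans
    (MulEquiv.subgroupCongr (congrArg _ (Subsingleton.elim _ _)))).symm.trans
    (Sylow.directProductOfNormal fun _ => inferInstance)

end sylow

theorem stmt_5 (G : Type*) [Group G] [Fintype G] (hnil : Group.IsNilpotent G)
    (P : ∀ p ∈ (Nat.card G).primeFactors, Sylow p G) :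
    csd G = ∏ p ∈ (Nat.card G).primeFactors.attach, csd ↥((P p.1 p.2 : Subgroup G)) := by
  rw [← Finset.univ_eq_attach, ← csd_pi_of_coprime (Sylow.pairwise_coprime_card P)]
  exact csd_congr (Sylow.piMulEquivOfIsNilpotent P).symm
end

section
/- For every integer n ≥ 2, the dihedral group D_{2^n} of order 2^n satisfies csd(D_{2^n}) = (n² + (n+1)·2^n) / (n + 2^{n−1})². In particular, csd(D₈) = 41/49. -/
/-!
The cyclic subgroups of the dihedral group of order `2m` are the rotation subgroups `⟨r d⟩`, one
for each divisor `d` of `m`, and the `m` subgroups `{1, sr i}`. Rotation subgroups are normal, so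
they permute with every subgroup, while `{1, sr i}{1, sr j} = {1, sr i, sr j, r (j - i)}`, so two
reflection subgroups permute iff `r (j - i) = r (i - j)`, i.e. `2 (i - j) = 0`. With `τ` the number
of divisors of `m` and `t` the number of solutions of `2 x = 0` in `ZMod m`, this gives
`csd = (τ² + 2mτ + mt) / (τ + m)²`. For `m = 2^(n-1)` we have `τ = n` and `t = 2`.
-/

open Pointwise

open Subgroup Finset

namespace Subgroup

variable {G : Type*} [Group G]

def Permutes (H K : Subgroup G) : Prop :=
  (H : Set G) * K = K * H

lemma Permutes.symm {H K : Subgroup G} (h : H.Permutes K) : K.Permutes H :=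
  Eq.symm h

lemma permutes_of_normal_left (N H : Subgroup G) [N.Normal] : N.Permutes H := by
  rw [Permutes, ← normal_mul, ← mul_normal, sup_comm]

end Subgroup

lemma csd_eq_of_equiv {G α : Type*} [Group G] (e : α ≃ {H : Subgroup G // IsCyclic H}) :
    csd G = Nat.card {q : α × α // (e q.1 : Subgroup G).Permutes (e q.2)} / Nat.card α ^ 2 := by
  rw [csd, Nat.card_congr e]
  congr 2
  exact Nat.card_congr <| Equiv.symm
    { toFun := fun q => ⟨((e q.1.1).1, (e q.1.2).1), (e q.1.1).2, (e q.1.2).2, q.2⟩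
      invFun := fun p => ⟨(e.symm ⟨p.1.1, p.2.1⟩, e.symm ⟨p.1.2, p.2.2.1⟩),
        by simpa [Subgroup.Permutes] using p.2.2.2⟩
      left_inv := fun q => by simp
      right_inv := fun p => by simp }

lemma ZMod.card_two_mul_sub_eq_zero {m : ℕ} [NeZero m] (i : ZMod m) :
    #{j : ZMod m | 2 * (i - j) = 0} = #{x : ZMod m | 2 * x = 0} :=
  card_equiv (Equiv.subLeft i) (by simp)

lemma ZMod.card_two_mul_eq_zero_of_even {m : ℕ} [NeZero m] (hm : Even m) :
    #{x : ZMod m | 2 * x = 0} = 2 := by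
  obtain ⟨k, rfl⟩ := hm
  apply le_antisymm
  · simpa [nsmul_eq_mul] using IsAddCyclic.card_nsmul_eq_zero_le (α := ZMod (k + k)) two_pos
  · have hk0 : 0 < k := Nat.pos_of_ne_zero fun h => NeZero.ne (k + k) (by omega)
    have hk : (k : ZMod (k + k)) ≠ 0 := by
      rw [Ne, ZMod.natCast_eq_zero_iff]
      exact fun h => absurd (Nat.le_of_dvd hk0 h) (by omega)
    calc 2 = #{0, (k : ZMod (k + k))} := (card_pair hk.symm).symm
      _ ≤ _ := card_le_card fun x hx => by
        rcases mem_insert.mp hx with rfl | hx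
        · simp
        · simp [mem_singleton.mp hx, two_mul, ← Nat.cast_add]

lemma Nat.card_divisors_prime_pow {p : ℕ} (hp : p.Prime) (k : ℕ) : #(p ^ k).divisors = k + 1 := by
  rw [Nat.divisors_prime_pow hp, card_map, card_range]

namespace DihedralGroup

variable {m : ℕ}

lemma mem_zpowers_r_iff {a : ZMod m} {x : DihedralGroup m} :
    x ∈ zpowers (r a) ↔ ∃ k : ℤ, r (a * (k : ZMod m)) = x := by
  simp only [mem_zpowers_iff, r_zpow]

lemma sr_notMem_zpowers_r (a i : ZMod m) : sr i ∉ zpowers (r a) := by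
  rw [mem_zpowers_r_iff]
  rintro ⟨k, ⟨⟩⟩

instance normal_zpowers_r (a : ZMod m) : (zpowers (r a)).Normal where
  conj_mem x hx g := by
    obtain ⟨k, rfl⟩ := mem_zpowers_r_iff.mp hx
    rw [mem_zpowers_r_iff]
    cases g with
    | r c => exact ⟨k, by simp [r_mul_r, inv_r]⟩
    | sr c => exact ⟨-k, by simp [sr_mul_r, sr_mul_sr, inv_sr]⟩

lemma coe_zpowers_sr (i : ZMod m) : (zpowers (sr i) : Set (DihedralGroup m)) = {1, sr i} := by
  ext x
  simp only [SetLike.mem_coe, mem_zpowers_iff, Set.mem_insert_iff, Set.mem_singleton_iff]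
  constructor
  · rintro ⟨k, rfl⟩
    rcases Int.even_or_odd k with ⟨l, rfl⟩ | ⟨l, rfl⟩
    · left
      rw [← two_mul, zpow_mul, zpow_two, sr_mul_self, one_zpow]
    · right
      rw [zpow_add, zpow_mul, zpow_two, sr_mul_self, one_zpow, one_mul, zpow_one]
  · rintro (rfl | rfl)
    exacts [⟨0, zpow_zero _⟩, ⟨1, zpow_one _⟩]

lemma pair_sr_mul_pair_sr (i j : ZMod m) :
    ({1, sr i} : Set (DihedralGroup m)) * {1, sr j} = {1, sr i, sr j, r (j - i)} := by
  ext x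
  simp only [Set.mem_mul, Set.mem_insert_iff, Set.mem_singleton_iff]
  constructor
  · rintro ⟨a, (rfl | rfl), b, (rfl | rfl), rfl⟩ <;> simp [sr_mul_sr]
  · rintro (rfl | rfl | rfl | rfl)
    · exact ⟨1, .inl rfl, 1, .inl rfl, mul_one 1⟩
    · exact ⟨sr i, .inr rfl, 1, .inl rfl, mul_one _⟩
    · exact ⟨1, .inl rfl, sr j, .inr rfl, one_mul _⟩
    · exact ⟨sr i, .inr rfl, sr j, .inr rfl, sr_mul_sr i j⟩

lemma permutes_zpowers_sr_iff (i j : ZMod m) :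
    (zpowers (sr i)).Permutes (zpowers (sr j)) ↔ 2 * (i - j) = 0 := by
  rw [Permutes, coe_zpowers_sr, coe_zpowers_sr, pair_sr_mul_pair_sr, pair_sr_mul_pair_sr]
  constructor
  · intro h
    have : r (j - i) ∈ ({1, sr j, sr i, r (i - j)} : Set (DihedralGroup m)) := h ▸ by simp
    simp only [Set.mem_insert_iff, Set.mem_singleton_iff, one_def, r.injEq, reduceCtorEq,
      false_or] at this
    rcases this with h | h
    · linear_combination -2 * h
    · linear_combination -h
  · intro h
    rw [show j - i = i - j by linear_combination -h, Set.insert_comm (sr i) (sr j)]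

lemma permutes_zpowers_r_left (a : ZMod m) (H : Subgroup (DihedralGroup m)) :
    (zpowers (r a)).Permutes H :=
  permutes_of_normal_left _ _

lemma permutes_zpowers_r_right (H : Subgroup (DihedralGroup m)) (a : ZMod m) :
    H.Permutes (zpowers (r a)) :=
  (permutes_zpowers_r_left a H).symm

lemma orderOf_r_natCast_of_dvd [NeZero m] {d : ℕ} (hd : d ∣ m) :
    orderOf (r (d : ZMod m)) = m / d := by
  rw [orderOf_r, ZMod.val_natCast, Nat.gcd_comm, ← Nat.gcd_rec, Nat.gcd_eq_right hd]

lemma zpowers_r_eq_zpowers_r_gcd [NeZero m] (i : ZMod m) :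
    zpowers (r i) = zpowers (r ((i.val.gcd m : ℕ) : ZMod m)) := by
  have hi : ((i.val : ℕ) : ZMod m) = i := ZMod.natCast_zmod_val i
  apply le_antisymm <;> rw [zpowers_le, mem_zpowers_r_iff]
  · obtain ⟨c, hc⟩ := Nat.gcd_dvd_left i.val m
    refine ⟨c, congrArg r ?_⟩
    simpa [hi] using congrArg (Nat.cast : ℕ → ZMod m) hc.symm
  · refine ⟨i.val.gcdA m, ?_⟩
    have bezout := congrArg (Int.cast : ℤ → ZMod m) (Nat.gcd_eq_gcd_ab i.val m)
    push_cast [ZMod.natCast_self, hi, zero_mul, add_zero] at bezout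
    rw [bezout, mul_comm]

def cyclicGen : m.divisors ⊕ ZMod m → DihedralGroup m
  | .inl d => r (d : ℕ)
  | .inr i => sr i

lemma zpowers_cyclicGen_injective [NeZero m] :
    Function.Injective fun x : m.divisors ⊕ ZMod m => zpowers (cyclicGen x) := by
  rintro (⟨d, hd⟩ | i) (⟨d', hd'⟩ | j) h <;> simp only [cyclicGen] at h
  · have hcard := congrArg (fun H : Subgroup (DihedralGroup m) => Nat.card H) h
    simp only [Nat.card_zpowers, orderOf_r_natCast_of_dvd (Nat.dvd_of_mem_divisors hd),
      orderOf_r_natCast_of_dvd (Nat.dvd_of_mem_divisors hd')] at hcard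
    have : d = d' := by
      rw [← Nat.div_div_self (Nat.dvd_of_mem_divisors hd) (NeZero.ne m), hcard,
        Nat.div_div_self (Nat.dvd_of_mem_divisors hd') (NeZero.ne m)]
    subst this
    rfl
  · exact absurd (h ▸ mem_zpowers (sr j)) (sr_notMem_zpowers_r _ _)
  · exact absurd (h ▸ mem_zpowers (sr i)) (sr_notMem_zpowers_r _ _)
  · have : sr i ∈ (zpowers (sr j) : Set (DihedralGroup m)) := h ▸ mem_zpowers _
    rw [coe_zpowers_sr] at this
    obtain h1 | ⟨⟨⟩⟩ := this
    · cases h1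
    · rfl

lemma exists_zpowers_cyclicGen_eq [NeZero m] {H : Subgroup (DihedralGroup m)} (hH : IsCyclic H) :
    ∃ x, zpowers (cyclicGen x) = H := by
  obtain ⟨g | i, rfl⟩ := (Subgroup.isCyclic_iff_exists_zpowers_eq_top H).mp hH
  · refine ⟨.inl ⟨g.val.gcd m, Nat.mem_divisors.mpr ⟨Nat.gcd_dvd_right _ _, NeZero.ne m⟩⟩, ?_⟩
    exact (zpowers_r_eq_zpowers_r_gcd g).symm
  · exact ⟨.inr i, rfl⟩

noncomputable def cyclicSubgroupEquiv [NeZero m] :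
    m.divisors ⊕ ZMod m ≃ {H : Subgroup (DihedralGroup m) // IsCyclic H} :=
  .ofBijective (fun x => ⟨zpowers (cyclicGen x), inferInstance⟩)
    ⟨fun _ _ h => zpowers_cyclicGen_injective (congrArg Subtype.val h),
      fun H => (exists_zpowers_cyclicGen_eq H.2).imp fun _ hx => Subtype.ext hx⟩

lemma card_permutes_cyclicSubgroupEquiv [NeZero m] :
    Nat.card {q : (m.divisors ⊕ ZMod m) × (m.divisors ⊕ ZMod m) //
      (cyclicSubgroupEquiv q.1 : Subgroup (DihedralGroup m)).Permutes (cyclicSubgroupEquiv q.2)} =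
      #m.divisors ^ 2 + 2 * m * #m.divisors + m * #{x : ZMod m | 2 * x = 0} := by
  classical
  rw [Nat.card_eq_fintype_card, Fintype.card_subtype, card_filter, Fintype.sum_prod_type]
  simp only [Fintype.sum_sum_type, cyclicSubgroupEquiv, Equiv.ofBijective_apply, cyclicGen,
    permutes_zpowers_r_left, permutes_zpowers_r_right, permutes_zpowers_sr_iff]
  simp only [univ_eq_attach, ↓reduceIte, sum_const, card_attach, smul_eq_mul, mul_one, card_univ,
    ZMod.card, sum_boole, ZMod.card_two_mul_sub_eq_zero, Nat.cast_id]
  ring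

theorem csd_eq [NeZero m] :
    csd (DihedralGroup m) =
      ((#m.divisors : ℚ) ^ 2 + 2 * m * #m.divisors + m * #{x : ZMod m | 2 * x = 0}) /
        (#m.divisors + m) ^ 2 := by
  rw [csd_eq_of_equiv cyclicSubgroupEquiv, card_permutes_cyclicSubgroupEquiv, Nat.card_sum,
    Nat.card_eq_finsetCard, Nat.card_zmod]
  push_cast
  rfl

theorem csd_eq_of_even [NeZero m] (hm : Even m) :
    csd (DihedralGroup m) =
      ((#m.divisors : ℚ) ^ 2 + 2 * m * #m.divisors + 2 * m) / (#m.divisors + m) ^ 2 := by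
  rw [csd_eq, ZMod.card_two_mul_eq_zero_of_even hm]
  push_cast
  ring

end DihedralGroup

theorem stmt_9 (n : ℕ) (hn : 2 ≤ n) :
    csd (DihedralGroup (2 ^ (n - 1))) =
      ((n : ℚ) ^ 2 + ((n : ℚ) + 1) * 2 ^ n) / ((n : ℚ) + 2 ^ (n - 1)) ^ 2 ∧
    csd (DihedralGroup 4) = 41 / 49 := by
  constructor
  · have : NeZero (2 ^ (n - 1)) := ⟨by positivity⟩
    have two_pow : (2 : ℚ) ^ n = 2 * 2 ^ (n - 1) := by
      rw [← pow_succ']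
      congr 1
      omega
    rw [DihedralGroup.csd_eq_of_even (Nat.even_pow.mpr ⟨even_two, by omega⟩),
      Nat.card_divisors_prime_pow Nat.prime_two, Nat.sub_add_cancel (by omega), two_pow]
    push_cast
    ring
  · have : #(Nat.divisors 4) = 3 := by decide
    rw [DihedralGroup.csd_eq_of_even (by decide), this]
    norm_num
end

section
/- The sequence csd(D_{2^n}), where D_{2^n} is the dihedral group of order 2^n, converges to 0 as n → ∞. -/
/-!
In `DihedralGroup n` (of order `2n`) a cyclic subgroup either lies in the rotation subgroup
`⟨r 1⟩` or is a reflection subgroup `⟨sr i⟩` of order two, so `|L₁| ≥ n`. The subgroups of the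
cyclic group `⟨r 1⟩` are determined by their orders, so there are only `d(n)` of them (one per
divisor of `n`), and two reflection subgroups `⟨sr i⟩`, `⟨sr j⟩` permute only if `2 (j - i) = 0`,
which leaves at most two `j` for each `i`. Hence at most `(2 d(n) + 2) |L₁|` pairs permute and
`csd ≤ (2 d(n) + 2) / |L₁| ≤ (2 d(n) + 2) / n`, which is `(2k + 4) / 2 ^ k` for `n = 2 ^ k`.
-/

open Pointwise

open Subgroup Filter Topology

def cyclicPermutingPairs (G : Type*) [Group G] : Set (Subgroup G × Subgroup G) :=
  {pr | IsCyclic pr.1 ∧ IsCyclic pr.2 ∧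
    (pr.1 : Set G) * (pr.2 : Set G) = (pr.2 : Set G) * (pr.1 : Set G)}

section csd

variable (G : Type*) [Group G]

theorem csd_eq_ncard :
    csd G = (cyclicPermutingPairs G).ncard / ({H : Subgroup G | IsCyclic H}.ncard : ℚ) ^ 2 :=
  rfl

theorem csd_nonneg : 0 ≤ csd G := by
  rw [csd_eq_ncard]
  positivity

variable {G}

theorem csd_le_of_ncard_le {c m : ℕ} (hm : 0 < m)
    (hpairs : (cyclicPermutingPairs G).ncard ≤ c * {H : Subgroup G | IsCyclic H}.ncard)
    (hcyc : m ≤ {H : Subgroup G | IsCyclic H}.ncard) :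
    csd G ≤ c / m := by
  have hcyc0 : (0 : ℚ) < {H : Subgroup G | IsCyclic H}.ncard := by exact_mod_cast hm.trans_le hcyc
  rw [csd_eq_ncard, div_le_div_iff₀ (pow_pos hcyc0 2) (by exact_mod_cast hm)]
  exact_mod_cast (Nat.mul_le_mul hpairs hcyc).trans_eq (by ring)

end csd

theorem mem_zpowers_iff_of_orderOf_eq_two {G : Type*} [Group G] {g x : G} (hg : orderOf g = 2) :
    x ∈ zpowers g ↔ x = 1 ∨ x = g := by
  classical
  rw [(orderOf_pos_iff.mp (hg ▸ two_pos)).mem_zpowers_iff_mem_range_orderOf, hg]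
  simp [Finset.range_add_one, eq_comm, or_comm]

namespace Subgroup

variable {G : Type*} [Group G] [Finite G]

theorem eq_zpowers_pow_of_le_zpowers {g : G} {H : Subgroup G} {e : ℕ} (hle : H ≤ zpowers g)
    (he : orderOf g = Nat.card H * e) : H = zpowers (g ^ e) := by
  have hH : 0 < Nat.card H := Nat.card_pos
  have he0 : e ≠ 0 := by rintro rfl; exact (orderOf_pos g).ne' (by simpa using he)
  refine eq_of_le_of_card_ge (fun x hx => ?_) ?_
  · obtain ⟨z, rfl⟩ := mem_zpowers_iff.mp (hle hx)
    have hz : (Nat.card H * e : ℤ) ∣ z * Nat.card H := by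
      rw [← Nat.cast_mul, ← he, orderOf_dvd_iff_zpow_eq_one, zpow_mul, zpow_natCast]
      simpa only [SubgroupClass.coe_pow, OneMemClass.coe_one] using
        congrArg Subtype.val (pow_card_eq_one' (x := (⟨_, hx⟩ : H)))
    obtain ⟨c, rfl⟩ : (e : ℤ) ∣ z := by
      rw [mul_comm z] at hz
      exact (mul_dvd_mul_iff_left (by exact_mod_cast hH.ne')).mp hz
    exact ⟨c, by simp [zpow_mul]⟩
  · rw [Nat.card_zpowers, orderOf_pow_of_dvd he0 (Dvd.intro_left _ he.symm), he,
      Nat.mul_div_cancel _ (Nat.pos_of_ne_zero he0)]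

theorem eq_of_le_zpowers_of_card_eq {g : G} {H K : Subgroup G} (hH : H ≤ zpowers g)
    (hK : K ≤ zpowers g) (hcard : Nat.card H = Nat.card K) : H = K := by
  obtain ⟨e, he⟩ : Nat.card H ∣ orderOf g := Nat.card_zpowers g ▸ card_dvd_of_le hH
  rw [eq_zpowers_pow_of_le_zpowers hH he, eq_zpowers_pow_of_le_zpowers hK (hcard ▸ he)]

theorem ncard_setOf_le_zpowers_le (g : G) :
    {H : Subgroup G | H ≤ zpowers g}.ncard ≤ (orderOf g).divisors.card := by
  rw [← Set.ncard_coe_finset]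
  refine Set.ncard_le_ncard_of_injOn (fun H => Nat.card H) (fun H hH => ?_)
    (fun H hH K hK => eq_of_le_zpowers_of_card_eq hH hK)
  simpa [(orderOf_pos g).ne'] using Nat.card_zpowers g ▸ card_dvd_of_le hH

end Subgroup

theorem ZMod.ncard_two_mul_eq_zero_le (n : ℕ) [NeZero n] :
    {z : ZMod n | 2 * z = 0}.ncard ≤ 2 := by
  classical
  simpa [Set.ncard_eq_toFinset_card', nsmul_eq_mul] using
    IsAddCyclic.card_nsmul_eq_zero_le (α := ZMod n) two_pos

namespace DihedralGroup

variable {n : ℕ}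

theorem mem_zpowers_sr {i : ZMod n} {x : DihedralGroup n} :
    x ∈ zpowers (sr i) ↔ x = 1 ∨ x = sr i :=
  mem_zpowers_iff_of_orderOf_eq_two (orderOf_sr i)

theorem zpowers_sr_injective : Function.Injective fun i : ZMod n => zpowers (sr i) := by
  intro i j (h : zpowers (sr i) = zpowers (sr j))
  have hj : sr j ∈ zpowers (sr i) := h ▸ mem_zpowers _
  simpa [mem_zpowers_sr, ← r_zero, eq_comm] using hj

theorem exists_eq_zpowers_sr_of_not_le {H : Subgroup (DihedralGroup n)} (hH : IsCyclic H)
    (hR : ¬H ≤ zpowers (r 1)) : ∃ i, H = zpowers (sr i) := by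
  obtain ⟨g, rfl⟩ := H.isCyclic_iff_exists_zpowers_eq_top.mp hH
  cases g with
  | r i => exact absurd (zpowers_le.mpr (mem_zpowers_iff.mpr ⟨i.cast, by simp⟩)) hR
  | sr i => exact ⟨i, rfl⟩

theorem two_mul_sub_eq_zero_of_zpowers_sr_mul_comm {i j : ZMod n}
    (h : (zpowers (sr i) : Set (DihedralGroup n)) * (zpowers (sr j) : Set (DihedralGroup n)) =
      (zpowers (sr j) : Set (DihedralGroup n)) * (zpowers (sr i) : Set (DihedralGroup n))) :
    2 * (j - i) = 0 := by
  obtain ⟨a, ha, b, hb, hab⟩ : sr i * sr j ∈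
      (zpowers (sr j) : Set (DihedralGroup n)) * (zpowers (sr i) : Set (DihedralGroup n)) :=
    h ▸ Set.mul_mem_mul (mem_zpowers _) (mem_zpowers _)
  rw [SetLike.mem_coe, mem_zpowers_sr] at ha hb
  rcases ha with rfl | rfl <;> rcases hb with rfl | rfl <;>
    simp only [← r_zero, r_mul_r, r_mul_sr, sr_mul_r, sr_mul_sr, add_zero, sub_zero, r.injEq,
      reduceCtorEq] at hab
  · rw [← hab, mul_zero]
  · linear_combination -hab

section NeZero

variable [NeZero n]

theorem le_ncard_isCyclic : n ≤ {H : Subgroup (DihedralGroup n) | IsCyclic H}.ncard :=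
  calc n = Nat.card (ZMod n) := (Nat.card_zmod n).symm
    _ ≤ _ := Nat.card_le_card_of_injective (fun i => ⟨zpowers (sr i), isCyclic_zpowers _⟩)
      fun _ _ h => zpowers_sr_injective (congrArg Subtype.val h)

theorem ncard_cyclicPermutingPairs_le :
    (cyclicPermutingPairs (DihedralGroup n)).ncard ≤
      (2 * n.divisors.card + 2) * {H : Subgroup (DihedralGroup n) | IsCyclic H}.ncard := by
  set C := {H : Subgroup (DihedralGroup n) | IsCyclic H}
  set L := {H : Subgroup (DihedralGroup n) | H ≤ zpowers (r 1)}
  set T := {z : ZMod n | 2 * z = 0}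
  let reflections (p : ZMod n × ZMod n) := (zpowers (sr p.1), zpowers (sr (p.1 + p.2)))
  have hsub : cyclicPermutingPairs (DihedralGroup n) ⊆
      L ×ˢ C ∪ C ×ˢ L ∪ reflections '' (Set.univ ×ˢ T) := by
    rintro ⟨H, K⟩ ⟨hH, hK, hHK⟩
    by_cases hHR : H ≤ zpowers (r 1)
    · exact Or.inl (Or.inl ⟨hHR, hK⟩)
    by_cases hKR : K ≤ zpowers (r 1)
    · exact Or.inl (Or.inr ⟨hH, hKR⟩)
    obtain ⟨i, rfl⟩ := exists_eq_zpowers_sr_of_not_le hH hHR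
    obtain ⟨j, rfl⟩ := exists_eq_zpowers_sr_of_not_le hK hKR
    exact Or.inr ⟨(i, j - i), ⟨trivial, two_mul_sub_eq_zero_of_zpowers_sr_mul_comm hHK⟩,
      by simp [reflections]⟩
  have hL : L.ncard ≤ n.divisors.card := by
    simpa using ncard_setOf_le_zpowers_le (r 1 : DihedralGroup n)
  have hrefl : (reflections '' (Set.univ ×ˢ T)).ncard ≤ n * 2 :=
    calc _ ≤ (Set.univ ×ˢ T).ncard := Set.ncard_image_le
      _ ≤ n * 2 := by
        rw [Set.ncard_prod, Set.ncard_univ, Nat.card_zmod]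
        exact Nat.mul_le_mul_left n (ZMod.ncard_two_mul_eq_zero_le n)
  have hC : n ≤ C.ncard := le_ncard_isCyclic
  calc _ ≤ (L ×ˢ C ∪ C ×ˢ L ∪ reflections '' (Set.univ ×ˢ T)).ncard :=
        Set.ncard_le_ncard hsub
    _ ≤ L.ncard * C.ncard + C.ncard * L.ncard + n * 2 := by
      grw [Set.ncard_union_le, Set.ncard_union_le, Set.ncard_prod, Set.ncard_prod, hrefl]
    _ ≤ (2 * n.divisors.card + 2) * C.ncard := by nlinarith

theorem csd_le : csd (DihedralGroup n) ≤ (2 * n.divisors.card + 2 : ℕ) / n :=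
  csd_le_of_ncard_le (Nat.pos_of_neZero n) ncard_cyclicPermutingPairs_le le_ncard_isCyclic

end NeZero

theorem csd_two_pow_le (k : ℕ) : csd (DihedralGroup (2 ^ k)) ≤ (2 * k + 4) / 2 ^ k := by
  have hdiv : (2 ^ k).divisors.card = k + 1 := by
    rw [Nat.divisors_prime_pow Nat.prime_two, Finset.card_map, Finset.card_range]
  calc _ ≤ _ := csd_le
    _ = _ := by rw [hdiv]; push_cast; ring

theorem tendsto_csd_two_pow :
    Tendsto (fun k : ℕ => (csd (DihedralGroup (2 ^ k)) : ℝ)) atTop (𝓝 0) := by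
  have hbound : Tendsto (fun k : ℕ => (2 * k + 4 : ℝ) / 2 ^ k) atTop (𝓝 0) := by
    have h := ((tendsto_pow_const_div_const_pow_of_one_lt 1 one_lt_two).const_mul 2).add
      ((tendsto_pow_const_div_const_pow_of_one_lt 0 one_lt_two).const_mul 4)
    simp only [mul_zero, add_zero, pow_one, pow_zero] at h
    refine h.congr fun k => ?_
    field_simp
  refine squeeze_zero (fun k => by exact_mod_cast csd_nonneg (DihedralGroup (2 ^ k)))
    (fun k => ?_) hbound
  simpa using (Rat.cast_le (K := ℝ)).mpr (csd_two_pow_le k)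

end DihedralGroup

theorem stmt_10 :
    Filter.Tendsto (fun n : ℕ => (csd (DihedralGroup (2 ^ (n - 1))) : ℝ))
      Filter.atTop (nhds 0) :=
  DihedralGroup.tendsto_csd_two_pow.comp (tendsto_sub_atTop_nat 1)
end
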